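/- Let F = ℤ/2ℤ, C a chain complex over F with a differential ∂ and commuting square-zero chain operators p₁, p₂, q₁, q₂, r, and an operator H of homological degree -1 satisfying the Bar-Natan/Khovanov local relations: ∂H + H∂ = p₁+p₂, Hr = rH, H² = 0, Hp₁ = p₂H, Hp₂ = p₁H. Let Ξ = F[ξ,ξ⁻¹]/ξF[ξ] and R = F[X]/(X²). On C̄ = C⊗R⊗Ξ with differential ∂_{C̄}(c⊗r⊗ξ) = (∂c)⊗r⊗ξ + ((p₁+p₂)c⊗r + c⊗Xr)⊗(ξ₁ξ) (where the color of p₁,p₂ is X), the map Φ = Id⊗Id⊗Id + H⊗Id⊗ξ₁ is an R-linear chain map, and Φ² = Id (so Φ is an isomorphism of R-chain complexes). -/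
import Mathlib


/-!
STATEMENT 15: Let F = ℤ/2ℤ and C a chain complex over F with differential ∂, commuting
square-zero chain operators p₁, p₂, q₁, q₂, r, and an operator H (the basepoint sliding
homotopy) satisfying the Bar-Natan/Khovanov local relations
  ∂H + H∂ = p₁ + p₂,  Hr = rH,  H² = 0,  Hp₁ = p₂H,  Hp₂ = p₁H.
Let Ξ = F[ξ,ξ⁻¹]/ξF[ξ] and R = F[X]/(X²).  On C̄ = C⊗R⊗Ξ with the preferred-resolution
differential (the action of X being p₁ before the slide and p₂ after, both complexes
identified with the same underlying module), the map Φ = Id⊗Id⊗Id + H⊗Id⊗ξ₁ is an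
R-linear chain map, and Φ² = Id, so Φ is an isomorphism of R-chain complexes.
-/

set_option synthInstance.maxHeartbeats 1000000
set_option maxHeartbeats 1000000

noncomputable section
open scoped TensorProduct

abbrev F2 := ZMod 2

/-- `R = F[X]/(X²)`. -/
abbrev Rsq : Type := Polynomial F2 ⧸ Ideal.span {(Polynomial.X : Polynomial F2) ^ 2}

def xR : Rsq := Ideal.Quotient.mk _ Polynomial.X

/-- `Ξ = F[ξ,ξ⁻¹]/ξF[ξ]`, basis `ξ^{-n}`. -/
abbrev Xi1 : Type := ℕ →₀ F2

/-- Multiplication by `ξ` on `Ξ`. -/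
def xish : Xi1 →ₗ[F2] Xi1 :=
  Finsupp.lsum F2 fun n => if n = 0 then (0 : F2 →ₗ[F2] Xi1) else Finsupp.lsingle (n - 1)

variable (C : Type) [AddCommGroup C] [Module F2 C]

abbrev CbarR : Type := (Rsq ⊗[F2] Xi1) ⊗[F2] C

/-- The preferred-resolution differential on `C̄` with the color `X` acting on `C` by
the operator `p`:  `∂⊗1⊗1 + 1⊗X⊗ξ₁ + p⊗1⊗ξ₁`. -/
def Dbar (dC : C →ₗ[F2] C) (p : C →ₗ[F2] C) : CbarR C →ₗ[F2] CbarR C :=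
  TensorProduct.map LinearMap.id dC +
    TensorProduct.map (TensorProduct.map (LinearMap.mulLeft F2 xR) xish) LinearMap.id +
    TensorProduct.map (TensorProduct.map LinearMap.id xish) p

/-- The `R`-action on `C̄`: multiplication by `X` on the middle factor. -/
def midX : CbarR C →ₗ[F2] CbarR C :=
  TensorProduct.map (TensorProduct.map (LinearMap.mulLeft F2 xR) LinearMap.id) LinearMap.id

/-- The slide map `Φ = Id⊗Id⊗Id + H⊗Id⊗ξ₁`. -/
def PhiSlide (H : C →ₗ[F2] C) : CbarR C →ₗ[F2] CbarR C :=
  LinearMap.id + TensorProduct.map (TensorProduct.map LinearMap.id xish) H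

theorem stmt15
    (dC : C →ₗ[F2] C) (hd2 : dC.comp dC = 0)
    (p₁ p₂ q₁ q₂ r : C →ₗ[F2] C) (H : C →ₗ[F2] C)
    -- p₁, p₂, q₁, q₂, r are commuting square-zero chain operators
    (hsq : ∀ e ∈ ({p₁, p₂, q₁, q₂, r} : Set (C →ₗ[F2] C)), e.comp e = 0)
    (hcomm : ∀ e ∈ ({p₁, p₂, q₁, q₂, r} : Set (C →ₗ[F2] C)),
      ∀ e' ∈ ({p₁, p₂, q₁, q₂, r} : Set (C →ₗ[F2] C)), e.comp e' = e'.comp e)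
    (hchain : ∀ e ∈ ({p₁, p₂, q₁, q₂, r} : Set (C →ₗ[F2] C)), e.comp dC = dC.comp e)
    -- the local relations
    (hH1 : dC.comp H + H.comp dC = p₁ + p₂)
    (hHr : H.comp r = r.comp H)
    (hH2 : H.comp H = 0)
    (hHp₁ : H.comp p₁ = p₂.comp H)
    (hHp₂ : H.comp p₂ = p₁.comp H) :
    -- Φ is a chain map from C̄ (action p₁, before the slide) to C̄ (action p₂, after)
    (PhiSlide C H).comp (Dbar C dC p₁) = (Dbar C dC p₂).comp (PhiSlide C H) ∧
    -- Φ is R-linear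
    (PhiSlide C H).comp (midX C) = (midX C).comp (PhiSlide C H) ∧
    -- Φ is an involution, hence an isomorphism of R-chain complexes
    (PhiSlide C H).comp (PhiSlide C H) = LinearMap.id := by
  classical
  have addself : ∀ f : CbarR C →ₗ[F2] CbarR C, f + f = 0 := by
    intro f
    rw [← two_smul F2 f]
    have h2 : (2 : F2) = 0 := rfl
    rw [h2, zero_smul]
  set A : CbarR C →ₗ[F2] CbarR C :=
    TensorProduct.map (TensorProduct.map LinearMap.id xish) H with hA
  set T1 : CbarR C →ₗ[F2] CbarR C := TensorProduct.map LinearMap.id dC with hT1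
  set T2 : CbarR C →ₗ[F2] CbarR C :=
    TensorProduct.map (TensorProduct.map (LinearMap.mulLeft F2 xR) xish) LinearMap.id with hT2
  have hD : ∀ p : C →ₗ[F2] C, Dbar C dC p =
      T1 + T2 + TensorProduct.map (TensorProduct.map LinearMap.id xish) p := fun _ => rfl
  have hPhi : PhiSlide C H = LinearMap.id + A := rfl
  have e1 : A.comp T1 + T1.comp A =
      TensorProduct.map (TensorProduct.map LinearMap.id xish) p₁ +
        TensorProduct.map (TensorProduct.map LinearMap.id xish) p₂ := by
    rw [hA, hT1, ← TensorProduct.map_comp, ← TensorProduct.map_comp,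
      LinearMap.id_comp, LinearMap.comp_id, ← TensorProduct.map_add_right,
      add_comm (H.comp dC), hH1, TensorProduct.map_add_right]
  have e1' : T1.comp A = A.comp T1 +
      (TensorProduct.map (TensorProduct.map LinearMap.id xish) p₁ +
        TensorProduct.map (TensorProduct.map LinearMap.id xish) p₂) := by
    rw [← e1, ← add_assoc, addself, zero_add]
  have e2 : A.comp T2 = T2.comp A := by
    rw [hA, hT2, ← TensorProduct.map_comp, ← TensorProduct.map_comp,
      ← TensorProduct.map_comp, ← TensorProduct.map_comp,
      LinearMap.id_comp, LinearMap.comp_id, LinearMap.id_comp, LinearMap.comp_id]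
  have e3 : A.comp (TensorProduct.map (TensorProduct.map LinearMap.id xish) p₁) =
      (TensorProduct.map (TensorProduct.map LinearMap.id xish) p₂).comp A := by
    rw [hA, ← TensorProduct.map_comp, ← TensorProduct.map_comp,
      ← TensorProduct.map_comp, ← TensorProduct.map_comp,
      LinearMap.id_comp, hHp₁]
  refine ⟨?_, ?_, ?_⟩
  · rw [hPhi, hD, hD]
    simp only [LinearMap.add_comp, LinearMap.comp_add, LinearMap.id_comp, LinearMap.comp_id]
    rw [e2, e3, e1']
    abel_nf
    simp only [two_smul, addself, smul_zero, add_zero, zero_add]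
  · have : A.comp (midX C) = (midX C).comp A := by
      rw [hA, midX, ← TensorProduct.map_comp, ← TensorProduct.map_comp,
        ← TensorProduct.map_comp, ← TensorProduct.map_comp]
      simp only [LinearMap.id_comp, LinearMap.comp_id]
    rw [hPhi]
    simp only [LinearMap.add_comp, LinearMap.comp_add, LinearMap.id_comp, LinearMap.comp_id, this]
  · have hA2 : A.comp A = 0 := by
      rw [hA, ← TensorProduct.map_comp, ← TensorProduct.map_comp, hH2,
        TensorProduct.map_zero_right]
    rw [hPhi]
    simp only [LinearMap.add_comp, LinearMap.comp_add, LinearMap.id_comp, LinearMap.comp_id, hA2]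
    rw [add_zero, add_assoc, addself, add_zero]
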